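/- Let (A, q) be a metric p-group of exponent n = p^e that is generated by its isotropic elements, and let a ∈ A be an isotropic element of order n. Then there exists c ∈ A with q(c) = 1 such that B(a, c) is a primitive n-th root of unity, where B is the bilinear form associated to q. -/

import Mathlib

/-- The bilinear form associated to a quadratic form `q : A → kˣ`. -/
def Bform {A k : Type*} [AddCommGroup A] [Field k] (q : A → kˣ) (x y : A) : kˣ :=
  q (x + y) * (q x * q y)⁻¹

/-- `q : A → kˣ` is a quadratic form: `q(-x) = q(x)` and its associated form is bilinear. -/
def IsQuadraticForm {A k : Type*} [AddCommGroup A] [Field k] (q : A → kˣ) : Prop :=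
  (∀ x, q (-x) = q x) ∧ ∀ x y z, Bform q (x + y) z = Bform q x z * Bform q y z

/-- Non-degeneracy of the bilinear form associated to `q`. -/
def Nondeg {A k : Type*} [AddCommGroup A] [Field k] (q : A → kˣ) : Prop :=
  ∀ x, (∀ y, Bform q x y = 1) → x = 0

/-!
Since `B` is bilinear, the elements `y` with `B(p^(e-1) • a, y) = 1` form a subgroup. If every
isotropic `c` had `B(a, c)^(p^(e-1)) = 1`, this subgroup would contain the isotropic elements, hence
be all of `A`, and non-degeneracy would force `p^(e-1) • a = 0`, contradicting `ord a = p^e`. An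
isotropic `c` with `B(a, c)^(p^(e-1)) ≠ 1` then gives an element `B(a, c)` of order exactly `p^e`.
-/

section Bform

variable {A k : Type*} [AddCommGroup A] [Field k] {q : A → kˣ}

lemma Bform_comm (q : A → kˣ) (x y : A) : Bform q x y = Bform q y x := by
  unfold Bform; rw [add_comm, mul_comm (q x)]

def bformLeft (hq : IsQuadraticForm q) (z : A) : A →+ Additive kˣ :=
  AddMonoidHom.mk' (fun x => Additive.ofMul (Bform q x z)) fun x y => hq.2 x y z

lemma bformLeft_eq_zero_iff (hq : IsQuadraticForm q) (x z : A) :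
    bformLeft hq z x = 0 ↔ Bform q x z = 1 :=
  ofMul_eq_zero

lemma Bform_zero_left (hq : IsQuadraticForm q) (z : A) : Bform q 0 z = 1 :=
  (bformLeft hq z).map_zero

lemma Bform_nsmul_left (hq : IsQuadraticForm q) (n : ℕ) (x z : A) :
    Bform q (n • x) z = Bform q x z ^ n :=
  (bformLeft hq z).map_nsmul n x

lemma Bform_eq_one_of_closure_eq_top (hq : IsQuadraticForm q) {S : Set A}
    (hS : AddSubgroup.closure S = ⊤) {x : A} (hx : ∀ c ∈ S, Bform q x c = 1) (y : A) :
    Bform q x y = 1 := by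
  have hle : AddSubgroup.closure S ≤ (bformLeft hq x).ker := by
    refine (AddSubgroup.closure_le _).mpr fun c hc => ?_
    rw [SetLike.mem_coe, AddMonoidHom.mem_ker, bformLeft_eq_zero_iff, Bform_comm]
    exact hx c hc
  rw [hS] at hle
  rw [Bform_comm, ← bformLeft_eq_zero_iff hq]
  exact hle (AddSubgroup.mem_top y)

end Bform

theorem stmt5_general {k : Type*} [Field k]
    {A : Type*} [AddCommGroup A]
    (p e : ℕ) (hp : p.Prime) (he : 1 ≤ e)
    (q : A → kˣ) (hq : IsQuadraticForm q) (hnd : Nondeg q)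
    (hgen : AddSubgroup.closure {x : A | q x = 1} = ⊤)
    (a : A) (hord : addOrderOf a = p ^ e) :
    ∃ c : A, q c = 1 ∧ IsPrimitiveRoot (Bform q a c) (p ^ e) := by
  have := Fact.mk hp
  obtain ⟨j, rfl⟩ : ∃ j, e = j + 1 := ⟨e - 1, by omega⟩
  have hja : p ^ j • a ≠ 0 := by
    rw [ne_eq, ← addOrderOf_dvd_iff_nsmul_eq_zero, hord,
      Nat.pow_dvd_pow_iff_le_right hp.one_lt]
    omega
  obtain ⟨c, hc, hne⟩ : ∃ c, q c = 1 ∧ Bform q a c ^ p ^ j ≠ 1 := by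
    by_contra! h
    refine hja (hnd _ (Bform_eq_one_of_closure_eq_top hq hgen fun c hc => ?_))
    rw [Bform_nsmul_left hq]
    exact h c hc
  have hpow : Bform q a c ^ p ^ (j + 1) = 1 := by
    rw [← Bform_nsmul_left hq, ← hord, addOrderOf_nsmul_eq_zero, Bform_zero_left hq]
  refine ⟨c, hc, ?_⟩
  rw [← orderOf_eq_prime_pow hne hpow]
  exact IsPrimitiveRoot.orderOf _

/-- In an isotropically generated metric `p`-group of exponent `n = p^e`, for any
isotropic element `a` of order `n` there is `c` with `q(c) = 1` and `B(a, c)` a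
primitive `n`-th root of unity. -/
theorem stmt5 {k : Type*} [Field k] [CharZero k] [IsAlgClosed k]
    {A : Type*} [AddCommGroup A] [Finite A]
    (p e : ℕ) (hp : p.Prime) (he : 1 ≤ e)
    (q : A → kˣ) (hq : IsQuadraticForm q) (hnd : Nondeg q)
    (hexp : AddMonoid.exponent A = p ^ e)
    (hgen : AddSubgroup.closure {x : A | q x = 1} = ⊤)
    (a : A) (ha : q a = 1) (hord : addOrderOf a = p ^ e) :
    ∃ c : A, q c = 1 ∧ IsPrimitiveRoot (Bform q a c) (p ^ e) :=
  stmt5_general p e hp he q hq hnd hgen a hord
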